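/- Let the cookie-environment assumptions (A1)–(A3) hold with δ > 1, and fix γ ∈ (0, 1/2). Then P_V(Σ_{i=0}^{⌊n^γ⌋−1} V_i > n/5) = o(n^{2γ−(1+δ)/2}) as n → ∞, where P_V is the law of the backward branching process started at V_0 = 0. -/

import Mathlib

/-!
Conditionally on the environment, the row of coins at site `i` turns `V_i = v` into `V_{i+1}`,
the number of failures before the `(v+1)`-th success. If the coins are fair from index `M` on,
then `E[z^{V_{i+1}}] ≤ z^M u^{v+1}` whenever `2u = 1 + zu`, since `u = 1/(2 - z)` is the
generating function of a fair geometric variable. Along `c_j = (2k - j + 1)/(2k - j)` one has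
`c_{j+1} = 1/(2 - c_j)`, so iterating over `i ≤ k` rows gives `E[c_0^{V_i}] ≤ 2^{M+2}`, the
product `∏ c_j` being telescopic. By Markov, `P(V_i ≥ h) ≤ 2^{M+2} e^{-h/(2k+1)}` for `i ≤ k`.
If `∑_{i<k} V_i > n/5`, some `V_i` exceeds `n/(5k)`; with `k = ⌊n^γ⌋` this yields the bound
`2^{M+2} n^γ exp(-n^{1-2γ}/15)`, which decays faster than any power of `n`.

The quenched moments are computed along trajectories: the event that `V` follows a given
trajectory is covered by finitely many coin cylinders, whose probabilities are products of cookies.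
-/

open Filter Finset
open scoped ENNReal NNReal

noncomputable section

/-- Number of `true`s among the first `m` values of the Boolean sequence `b`
(i.e. `#{1 ≤ j ≤ m : B_j = 1}` with 0-based indexing). -/
def countTrue (b : ℕ → Bool) (m : ℕ) : ℕ := ((Finset.range m).filter fun j => b j = true).card

/-- Number of `false`s among the first `m` values of the Boolean sequence `b`. -/
def countFalse (b : ℕ → Bool) (m : ℕ) : ℕ := ((Finset.range m).filter fun j => b j = false).card

/-- The left forward branching process `Z` driven by the Bernoulli field `b`,
with initial condition `Z_0 = z`:
`Z_i = inf{m ≥ 0 : Σ_{j=1}^m B_{-i,j} = Z_{i-1}} - Z_{i-1}` for `i ≥ 1`. -/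
def leftBP (b : ℤ → ℕ → Bool) (z : ℕ) : ℕ → ℕ
  | 0 => z
  | i + 1 => sInf {m : ℕ | countTrue (b (-((i : ℤ) + 1))) m = leftBP b z i} - leftBP b z i

/-- The right forward branching process `W` driven by the Bernoulli field `b`,
with initial condition `W_0 = w`:
`W_i = inf{m ≥ 0 : Σ_{j=1}^m (1 - B_{i,j}) = W_{i-1}} - W_{i-1}` for `i ≥ 1`. -/
def rightBP (b : ℤ → ℕ → Bool) (w : ℕ) : ℕ → ℕ
  | 0 => w
  | i + 1 => sInf {m : ℕ | countFalse (b ((i : ℤ) + 1)) m = rightBP b w i} - rightBP b w i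

/-- The backward branching process `V` driven by the Bernoulli field `b`,
with initial condition `V_0 = v`:
`V_{i+1} = inf{m ≥ 0 : Σ_{j=1}^m B_{i,j} = V_i + 1} - V_i - 1`. -/
def backBP (b : ℤ → ℕ → Bool) (v : ℕ) : ℕ → ℕ
  | 0 => v
  | i + 1 => sInf {m : ℕ | countTrue (b (i : ℤ)) m = backBP b v i + 1} - (backBP b v i + 1)

/-- `τ_x^ξ = inf{t : ξ_t ≥ x}`, the first time the process `ξ` is above level `x`
(`= ∞` if there is no such time). -/
def tauAbove (ξ : ℕ → ℕ) (x : ℝ) : ℕ∞ := sInf {t : ℕ∞ | ∃ k : ℕ, t = k ∧ x ≤ (ξ k : ℝ)}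

/-- `σ_x^ξ = inf{t : ξ_t ≤ x}`, the first time the process `ξ` is below level `x`
(`= ∞` if there is no such time). -/
def sigmaBelow (ξ : ℕ → ℕ) (x : ℝ) : ℕ∞ := sInf {t : ℕ∞ | ∃ k : ℕ, t = k ∧ (ξ k : ℝ) ≤ x}

/-- A setup for a one-dimensional excited random walk in an i.i.d. cookie environment with
at most `M` cookies per site, satisfying assumptions (A1)-(A3), together with the auxiliary
Bernoulli random variables `B_{x,j}` (which, conditionally on the cookie environment, are
independent with `B_{x,j} ~ Bernoulli(ω(x,j))`) and the walk `X` constructed from them.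
Cookie indices are 0-based: `cookie ω x j` is the cookie used on the `(j+1)`-th visit to `x`. -/
structure ERWSetup where
  /-- the underlying sample space -/
  Ω : Type
  [mΩ : MeasurableSpace Ω]
  /-- the (averaged) probability measure -/
  μ : MeasureTheory.Measure Ω
  isProb : MeasureTheory.IsProbabilityMeasure μ
  /-- the number of cookies per site -/
  M : ℕ
  /-- the random cookie environment -/
  cookie : Ω → ℤ → ℕ → ℝ
  /-- the auxiliary Bernoulli random variables -/
  B : Ω → ℤ → ℕ → Bool
  /-- the excited random walk -/
  X : ℕ → Ω → ℤ
  meas_cookie : Measurable cookie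
  meas_B : Measurable B
  meas_X : ∀ n, Measurable (X n)
  cookie_mem : ∀ ω x j, cookie ω x j ∈ Set.Icc (0 : ℝ) 1
  /-- (A1): almost surely, all cookies beyond the first `M` at each site equal `1/2` -/
  A1 : ∀ᵐ ω ∂μ, ∀ (x : ℤ) (j : ℕ), M ≤ j → cookie ω x j = 1 / 2
  /-- (A2): the cookie stacks at distinct sites are independent -/
  A2_indep : ProbabilityTheory.iIndepFun (fun x ω => cookie ω x) μ
  /-- (A2): the cookie stacks at distinct sites are identically distributed -/
  A2_ident : ∀ x y : ℤ,
    ProbabilityTheory.IdentDistrib (fun ω => cookie ω x) (fun ω => cookie ω y) μ μ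
  /-- (A3), positive part -/
  A3_pos : 0 < ∫ ω, ∏ j ∈ Finset.range M, cookie ω 0 j ∂μ
  /-- (A3), negative part -/
  A3_neg : 0 < ∫ ω, ∏ j ∈ Finset.range M, (1 - cookie ω 0 j) ∂μ
  /-- conditionally on the cookie environment, the `B_{x,j}` are independent with
  `B_{x,j} ~ Bernoulli(ω(x,j))` (stated via conditional expectations given the σ-algebra
  generated by the environment) -/
  condB : ∀ (s : Finset (ℤ × ℕ)) (bv : ℤ × ℕ → Bool),
    (MeasureTheory.condExp (MeasurableSpace.comap cookie inferInstance) μ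
        (fun ω => if ∀ p ∈ s, B ω p.1 p.2 = bv p then (1 : ℝ) else 0))
      =ᵐ[μ] fun ω => ∏ p ∈ s, (if bv p then cookie ω p.1 p.2 else 1 - cookie ω p.1 p.2)
  /-- the walk starts at the origin -/
  X_zero : ∀ ω, X 0 ω = 0
  /-- on the `j`-th visit to a site `x`, the walk steps right if `B_{x,j} = 1`
  and left if `B_{x,j} = 0` -/
  X_step : ∀ ω n, X (n + 1) ω = X n ω +
    (if B ω (X n ω) (((Finset.range (n + 1)).filter fun k => X k ω = X n ω).card - 1)
      then 1 else -1)

attribute [instance] ERWSetup.mΩ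

open MeasureTheory ProbabilityTheory

namespace ERWSetup

variable (S : ERWSetup)

/-- the parameter `δ = E[Σ_j (2ω(0,j) - 1)]` -/
def delta : ℝ := ∫ ω, ∑' j : ℕ, (2 * S.cookie ω 0 j - 1) ∂S.μ

/-- `T_m = inf{k ≥ 0 : X_k = m}`, the hitting time of the site `m` by the walk
(`= ∞` if `m` is never visited). -/
def T (m : ℤ) (ω : S.Ω) : ℕ∞ := sInf {t : ℕ∞ | ∃ k : ℕ, t = k ∧ S.X k ω = m}

/-- `ρ_k`, the time of the `k`-th return of the walk to the origin. -/
def ret : ℕ → S.Ω → ℕ∞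
  | 0, _ => 0
  | k + 1, ω => sInf {t : ℕ∞ | ∃ j : ℕ, t = j ∧ ret k ω < (j : ℕ∞) ∧ S.X j ω = 0}

/-- `U_x^n = #{k ≤ n : X_{k-1} = x, X_k = x+1}`, the number of steps to the right
from `x` in the first `n` steps. -/
def U (x : ℤ) (n : ℕ) (ω : S.Ω) : ℕ :=
  ((Finset.Icc 1 n).filter fun k => S.X (k - 1) ω = x ∧ S.X k ω = x + 1).card

/-- `D_x^n = #{k ≤ n : X_{k-1} = x, X_k = x-1}`, the number of steps to the left
from `x` in the first `n` steps. -/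
def D (x : ℤ) (n : ℕ) (ω : S.Ω) : ℕ :=
  ((Finset.Icc 1 n).filter fun k => S.X (k - 1) ω = x ∧ S.X k ω = x - 1).card

/-- `R_n = Σ_{j=1}^n B_{0,j}` -/
def R (n : ℕ) (ω : S.Ω) : ℕ := countTrue (S.B ω 0) n

/-- `L_n(x) = #{k < n : X_k = x}`, the local time of the walk at `x` before time `n`. -/
def L (n : ℕ) (x : ℤ) (ω : S.Ω) : ℕ := ((Finset.range n).filter fun k => S.X k ω = x).card

/-- `r_1^V = inf{i > 0 : V_i = 0}`, the first return to `0` of the backward branching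
process started at `V_0 = 0`. -/
def r1 (ω : S.Ω) : ℕ∞ := sInf {t : ℕ∞ | ∃ k : ℕ, t = k ∧ 0 < k ∧ backBP (S.B ω) 0 k = 0}

/-- `S_1^V = Σ_{i=0}^{r_1^V - 1} V_i`, the total progeny of the backward branching process
(started at `V_0 = 0`) before its first return to `0`. -/
def S1 (ω : S.Ω) : ℝ≥0∞ := ∑' i : ℕ, if (i : ℕ∞) < S.r1 ω then (backBP (S.B ω) 0 i : ℝ≥0∞) else 0

/-- `r̄ = E_V[r_1^V]`, the mean return time to `0` of the backward branching process. -/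
def rbar : ℝ := (∫⁻ ω, (S.r1 ω : ℝ≥0∞) ∂S.μ).toReal

end ERWSetup
open MeasureTheory ProbabilityTheory

theorem countTrue_zero (b : ℕ → Bool) : countTrue b 0 = 0 := by
  simp [countTrue]

theorem countTrue_succ (b : ℕ → Bool) (m : ℕ) :
    countTrue b (m + 1) = countTrue b m + if b m then 1 else 0 := by
  unfold countTrue
  rw [range_add_one, filter_insert]
  split_ifs
  · rw [card_insert_of_notMem (by simp)]
  · simp

theorem countTrue_le (b : ℕ → Bool) (m : ℕ) : countTrue b m ≤ m :=
  (card_filter_le _ _).trans (card_range m).le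

theorem countTrue_mono (b : ℕ → Bool) : Monotone (countTrue b) := fun _ _ h =>
  card_le_card (filter_subset_filter _ (range_subset_range.2 h))

theorem card_filter_eq_false (b : ℕ → Bool) (m : ℕ) :
    #{j ∈ range m | b j = false} = m - countTrue b m := by
  have h := card_filter_add_card_filter_not (s := range m) (fun j => b j = true)
  simp only [Bool.not_eq_true, card_range] at h
  unfold countTrue
  omega

theorem exists_countTrue_eq_of_le (b : ℕ → Bool) {m n : ℕ} (h : n ≤ countTrue b m) :
    ∃ m', countTrue b m' = n := by
  induction m with
  | zero => exact ⟨0, by simp only [countTrue_zero, Nat.le_zero] at h ⊢; omega⟩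
  | succ m ih =>
    rcases Nat.lt_or_ge (countTrue b m) n with hlt | hge
    · refine ⟨m + 1, ?_⟩
      have := countTrue_succ b m
      split_ifs at this <;> omega
    · exact ih hge

theorem exists_countTrue_eq {b : ℕ → Bool} (hb : ∀ L, ∃ j, L ≤ j ∧ b j = true) (n : ℕ) :
    ∃ m, countTrue b m = n := by
  suffices ∀ n, ∃ m, n ≤ countTrue b m from
    exists_countTrue_eq_of_le b (this n).choose_spec
  intro n
  induction n with
  | zero => exact ⟨0, Nat.zero_le _⟩
  | succ n ih =>
    obtain ⟨m, hm⟩ := ih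
    obtain ⟨j, hmj, hj⟩ := hb m
    refine ⟨j + 1, ?_⟩
    rw [countTrue_succ, if_pos hj]
    exact Nat.succ_le_succ (hm.trans (countTrue_mono b hmj))

/-- The row `c` moves the backward branching process from `v` to `w`: the `(v+1)`-th success of
`c` happens at (0-based) trial `v + w`. -/
def IsTransition (c : ℕ → Bool) (v w : ℕ) : Prop :=
  countTrue c (v + w + 1) = v + 1 ∧ c (v + w) = true

theorem isTransition_sInf {c : ℕ → Bool} {v : ℕ} (h : ∃ m, countTrue c m = v + 1) :
    IsTransition c v (sInf {m | countTrue c m = v + 1} - (v + 1)) := by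
  set m₀ := sInf {m | countTrue c m = v + 1}
  have hm₀ : countTrue c m₀ = v + 1 := Nat.sInf_mem h
  have hle : v + 1 ≤ m₀ := hm₀ ▸ countTrue_le c m₀
  have hprev : countTrue c (m₀ - 1) ≠ v + 1 :=
    Nat.notMem_of_lt_sInf (s := {m | countTrue c m = v + 1}) (by omega)
  have hstep := countTrue_succ c (m₀ - 1)
  rw [Nat.sub_add_cancel (by omega)] at hstep
  have hrw : v + (m₀ - (v + 1)) = m₀ - 1 := by omega
  refine ⟨by rw [hrw, Nat.sub_add_cancel (by omega), hm₀], ?_⟩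
  rw [hrw]
  by_contra hc
  rw [if_neg hc] at hstep
  omega

theorem isTransition_backBP {b : ℤ → ℕ → Bool} {v i : ℕ}
    (h : ∃ m, countTrue (b i) m = backBP b v i + 1) :
    IsTransition (b i) (backBP b v i) (backBP b v (i + 1)) :=
  isTransition_sInf h

theorem IsTransition.exists_pattern {c : ℕ → Bool} {v w : ℕ} (h : IsTransition c v w) :
    ∃ T ∈ (range (v + w)).powersetCard w, ∀ j < v + w + 1, c j = decide (j ∉ T) := by
  refine ⟨{j ∈ range (v + w) | c j = false}, mem_powersetCard.2 ⟨filter_subset _ _, ?_⟩, ?_⟩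
  · have hstep := countTrue_succ c (v + w)
    rw [h.1, if_pos h.2] at hstep
    rw [card_filter_eq_false]
    omega
  · intro j hj
    by_cases hjlt : j < v + w
    · cases hc : c j <;> simp [hc, hjlt]
    · rw [show j = v + w by omega, h.2]
      simp

theorem cons_zero_backBP (b : ℤ → ℕ → Bool) (i : ℕ) :
    (Fin.cons 0 fun l : Fin i => backBP b 0 (l + 1) : Fin (i + 1) → ℕ) =
      fun l : Fin (i + 1) => backBP b 0 l := by
  funext l
  cases l using Fin.cases <;> simp [backBP]

def coinProb (b : Bool) (p : ℝ) : ℝ := if b then p else 1 - p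

theorem coinProb_mem_Icc (b : Bool) {p : ℝ} (hp : p ∈ Set.Icc (0 : ℝ) 1) :
    coinProb b p ∈ Set.Icc (0 : ℝ) 1 := by
  cases b <;> simp only [coinProb, Bool.false_eq_true, if_false, if_true, Set.mem_Icc] at hp ⊢ <;>
    constructor <;> linarith [hp.1, hp.2]

/-- The probability, for independent coins with success probabilities `η 0, η 1, …`, that
exactly `w` failures occur before the `(v+1)`-th success; `T` is the set of failed trials. -/
def negBinomWeight (η : ℕ → ℝ) (v w : ℕ) : ℝ≥0∞ :=
  ∑ T ∈ (range (v + w)).powersetCard w,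
    ∏ j ∈ range (v + w + 1), ENNReal.ofReal (coinProb (decide (j ∉ T)) (η j))

theorem sum_powersetCard_range_succ {M : Type*} [AddCommMonoid M] (f : Finset ℕ → M) (n w : ℕ) :
    ∑ T ∈ (range (n + 1)).powersetCard (w + 1), f T =
      ∑ T ∈ (range n).powersetCard (w + 1), f (T.map (addRightEmbedding 1)) +
        ∑ T ∈ (range n).powersetCard w, f (insert 0 (T.map (addRightEmbedding 1))) := by
  have hr : range (n + 1) = insert 0 ((range n).map (addRightEmbedding 1)) := by
    ext j; cases j <;> simp
  have h0 : 0 ∉ (range n).map (addRightEmbedding 1) := by simp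
  rw [hr, powersetCard_succ_insert h0, sum_union, powersetCard_map, sum_map,
    sum_image, powersetCard_map, sum_map]
  · rfl
  · intro A hA B hB hAB
    have hA0 : 0 ∉ A := fun h => h0 ((mem_powersetCard.1 hA).1 h)
    have hB0 : 0 ∉ B := fun h => h0 ((mem_powersetCard.1 hB).1 h)
    rw [← erase_insert hA0, ← erase_insert hB0]
    exact congrArg (·.erase 0) hAB
  · refine disjoint_left.2 fun T hT hT' => ?_
    obtain ⟨A, -, rfl⟩ := mem_image.1 hT'
    exact h0 ((mem_powersetCard.1 hT).1 (mem_insert_self 0 A))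

theorem prod_coinProb_map_succ (η : ℕ → ℝ) (T : Finset ℕ) (n : ℕ) :
    ∏ j ∈ range (n + 1),
        ENNReal.ofReal (coinProb (decide (j ∉ T.map (addRightEmbedding 1))) (η j)) =
      ENNReal.ofReal (η 0) *
        ∏ j ∈ range n, ENNReal.ofReal (coinProb (decide (j ∉ T)) (η (j + 1))) := by
  rw [prod_range_succ', mul_comm]
  simp [coinProb]

theorem prod_coinProb_insert_zero (η : ℕ → ℝ) (T : Finset ℕ) (n : ℕ) :
    ∏ j ∈ range (n + 1),
        ENNReal.ofReal (coinProb (decide (j ∉ insert 0 (T.map (addRightEmbedding 1)))) (η j)) =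
      ENNReal.ofReal (1 - η 0) *
        ∏ j ∈ range n, ENNReal.ofReal (coinProb (decide (j ∉ T)) (η (j + 1))) := by
  rw [prod_range_succ', mul_comm]
  simp [coinProb]

theorem negBinomWeight_zero_right (η : ℕ → ℝ) (v : ℕ) :
    negBinomWeight η v 0 = ∏ j ∈ range (v + 1), ENNReal.ofReal (η j) := by
  simp [negBinomWeight, coinProb]

theorem negBinomWeight_succ_zero (η : ℕ → ℝ) (v : ℕ) :
    negBinomWeight η (v + 1) 0 =
      ENNReal.ofReal (η 0) * negBinomWeight (fun j => η (j + 1)) v 0 := by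
  rw [negBinomWeight_zero_right, negBinomWeight_zero_right, prod_range_succ', mul_comm]

theorem negBinomWeight_zero_succ (η : ℕ → ℝ) (w : ℕ) :
    negBinomWeight η 0 (w + 1) =
      ENNReal.ofReal (1 - η 0) * negBinomWeight (fun j => η (j + 1)) 0 w := by
  simp only [negBinomWeight, zero_add]
  rw [sum_powersetCard_range_succ, powersetCard_eq_empty.2 (by simp), sum_empty, zero_add,
    mul_sum]
  exact sum_congr rfl fun T _ => prod_coinProb_insert_zero η T (w + 1)

theorem negBinomWeight_succ_succ (η : ℕ → ℝ) (v w : ℕ) :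
    negBinomWeight η (v + 1) (w + 1) =
      ENNReal.ofReal (η 0) * negBinomWeight (fun j => η (j + 1)) v (w + 1) +
        ENNReal.ofReal (1 - η 0) * negBinomWeight (fun j => η (j + 1)) (v + 1) w := by
  simp only [negBinomWeight, show v + 1 + (w + 1) = v + w + 1 + 1 by ring,
    show v + (w + 1) = v + w + 1 by ring, show v + 1 + w = v + w + 1 by ring]
  rw [sum_powersetCard_range_succ, mul_sum, mul_sum]
  congr 1
  · exact sum_congr rfl fun T _ => prod_coinProb_map_succ η T (v + w + 1 + 1)
  · exact sum_congr rfl fun T _ => prod_coinProb_insert_zero η T (v + w + 1 + 1)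

theorem mgf_step_le {p : ℝ} {z u : ℝ≥0∞} (hp : p ∈ Set.Icc (0 : ℝ) 1) (hzu : 1 ≤ z * u)
    (hrel : 2 * u = 1 + z * u) {m : ℕ} (hfair : m = 0 → p = 1 / 2) (k : ℕ) :
    ENNReal.ofReal p * (z ^ (m - 1) * u ^ k) +
        ENNReal.ofReal (1 - p) * z * (z ^ (m - 1) * u ^ (k + 1)) ≤ z ^ m * u ^ (k + 1) := by
  have hab : ENNReal.ofReal p + ENNReal.ofReal (1 - p) = 1 := by
    rw [← ENNReal.ofReal_add hp.1 (by linarith [hp.2])]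
    simp
  rcases m with _ | m
  · obtain rfl := hfair rfl
    rw [show (1 : ℝ) - 1 / 2 = 1 / 2 by norm_num] at hab ⊢
    refine le_of_eq ?_
    calc ENNReal.ofReal (1 / 2) * (z ^ (0 - 1) * u ^ k) +
          ENNReal.ofReal (1 / 2) * z * (z ^ (0 - 1) * u ^ (k + 1))
        = ENNReal.ofReal (1 / 2) * u ^ k * (1 + z * u) := by
          simp only [zero_tsub, pow_zero, one_mul]; ring
      _ = (ENNReal.ofReal (1 / 2) + ENNReal.ofReal (1 / 2)) * u ^ (k + 1) := by
          rw [← hrel]; ring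
      _ = z ^ 0 * u ^ (k + 1) := by rw [hab, pow_zero]
  · calc ENNReal.ofReal p * (z ^ (m + 1 - 1) * u ^ k) +
          ENNReal.ofReal (1 - p) * z * (z ^ (m + 1 - 1) * u ^ (k + 1))
        ≤ ENNReal.ofReal p * (z ^ m * u ^ k * (z * u)) +
            ENNReal.ofReal (1 - p) * z * (z ^ m * u ^ (k + 1)) := by
          rw [Nat.add_sub_cancel]
          gcongr _ * ?_ + _
          exact le_mul_of_one_le_right zero_le hzu
      _ = (ENNReal.ofReal p + ENNReal.ofReal (1 - p)) * (z ^ (m + 1) * u ^ (k + 1)) := by ring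
      _ = z ^ (m + 1) * u ^ (k + 1) := by rw [hab, one_mul]

theorem sum_range_succ_pow_mul_negBinomWeight_zero (z : ℝ≥0∞) (η : ℕ → ℝ) (N : ℕ) :
    ∑ w ∈ range (N + 1), z ^ w * negBinomWeight η 0 w =
      ENNReal.ofReal (η 0) + ENNReal.ofReal (1 - η 0) * z *
        ∑ w ∈ range N, z ^ w * negBinomWeight (fun j => η (j + 1)) 0 w := by
  rw [sum_range_succ', add_comm, mul_sum]
  congr 1
  · simp [negBinomWeight_zero_right]
  · refine sum_congr rfl fun w _ => ?_
    rw [negBinomWeight_zero_succ, pow_succ]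
    ring

theorem sum_range_succ_pow_mul_negBinomWeight_succ (z : ℝ≥0∞) (η : ℕ → ℝ) (v N : ℕ) :
    ∑ w ∈ range (N + 1), z ^ w * negBinomWeight η (v + 1) w =
      ENNReal.ofReal (η 0) * ∑ w ∈ range (N + 1), z ^ w * negBinomWeight (fun j => η (j + 1)) v w +
        ENNReal.ofReal (1 - η 0) * z *
          ∑ w ∈ range N, z ^ w * negBinomWeight (fun j => η (j + 1)) (v + 1) w := by
  rw [sum_range_succ', sum_range_succ' _ N, mul_add, mul_sum, mul_sum]
  simp only [negBinomWeight_succ_succ, negBinomWeight_succ_zero, pow_succ, pow_zero]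
  rw [add_right_comm, ← sum_add_distrib]
  congr 1
  · refine sum_congr rfl fun w _ => ?_
    ring
  · ring

/-- For fair coins `∑ z ^ w * negBinomWeight η v w = (2 - z)⁻¹ ^ (v + 1)`; here `u` stands
for `(2 - z)⁻¹`, and the factor `z ^ m` pays for the first `m` coins. -/
theorem sum_range_pow_mul_negBinomWeight_le {z u : ℝ≥0∞} (hz : 1 ≤ z) (hzu : 1 ≤ z * u)
    (hrel : 2 * u = 1 + z * u) (N : ℕ) :
    ∀ (v m : ℕ) (η : ℕ → ℝ), (∀ j, η j ∈ Set.Icc (0 : ℝ) 1) → (∀ j, m ≤ j → η j = 1 / 2) →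
      ∑ w ∈ range N, z ^ w * negBinomWeight η v w ≤ z ^ m * u ^ (v + 1) := by
  induction N with
  | zero => intro v m η _ _; simp
  | succ N ihN =>
    intro v
    induction v with
    | zero =>
      intro m η hη hfair
      refine le_trans ?_ (mgf_step_le (hη 0) hzu hrel (fun hm => hfair 0 (by omega)) 0)
      rw [sum_range_succ_pow_mul_negBinomWeight_zero]
      gcongr ?_ + _ * ?_
      · exact le_mul_of_one_le_right zero_le (by simpa using one_le_pow₀ hz)
      · exact ihN 0 _ _ (fun j => hη (j + 1)) fun j hj => hfair (j + 1) (by omega)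
    | succ v ihv =>
      intro m η hη hfair
      refine le_trans ?_ (mgf_step_le (hη 0) hzu hrel (fun hm => hfair 0 (by omega)) _)
      rw [sum_range_succ_pow_mul_negBinomWeight_succ]
      gcongr
      · exact ihv _ _ (fun j => hη (j + 1)) fun j hj => hfair (j + 1) (by omega)
      · exact ihN _ _ _ (fun j => hη (j + 1)) fun j hj => hfair (j + 1) (by omega)

theorem tsum_pow_mul_negBinomWeight_le {z u : ℝ≥0∞} (hz : 1 ≤ z) (hzu : 1 ≤ z * u)
    (hrel : 2 * u = 1 + z * u) {m : ℕ} {η : ℕ → ℝ} (hη : ∀ j, η j ∈ Set.Icc (0 : ℝ) 1)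
    (hfair : ∀ j, m ≤ j → η j = 1 / 2) (v : ℕ) :
    ∑' w, z ^ w * negBinomWeight η v w ≤ z ^ m * u ^ (v + 1) :=
  ENNReal.tsum_le_of_sum_range_le fun N =>
    sum_range_pow_mul_negBinomWeight_le hz hzu hrel N v m η hη hfair

/-- The quenched probability, in the environment `η`, that the backward branching process follows
the trajectory `u` through the rows `x, x + 1, …, x + i - 1`. -/
def pathWeight (η : ℤ → ℕ → ℝ) (x : ℤ) {i : ℕ} (u : Fin (i + 1) → ℕ) : ℝ≥0∞ :=
  ∏ l : Fin i, negBinomWeight (η (x + (l : ℕ))) (u l.castSucc) (u l.succ)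

theorem pathWeight_cons (η : ℤ → ℕ → ℝ) (x : ℤ) {i : ℕ} (a : ℕ) (t : Fin (i + 1) → ℕ) :
    pathWeight η x (Fin.cons a t : Fin (i + 2) → ℕ) =
      negBinomWeight (η x) a (t 0) * pathWeight η (x + 1) t := by
  rw [pathWeight, Fin.prod_univ_succ]
  congr 1
  · simp
  · refine prod_congr rfl fun l _ => ?_
    simp only [Fin.val_succ, Nat.cast_add, Nat.cast_one, ← Fin.succ_castSucc, Fin.cons_succ]
    ring_nf

theorem tsum_pow_mul_pathWeight_le {η : ℤ → ℕ → ℝ} {M : ℕ}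
    (hη : ∀ x j, η x j ∈ Set.Icc (0 : ℝ) 1) (hfair : ∀ x j, M ≤ j → η x j = 1 / 2)
    {c : ℕ → ℝ≥0∞} {i : ℕ} (hc : ∀ j ≤ i, 1 ≤ c j)
    (hrel : ∀ j < i, 2 * c (j + 1) = 1 + c j * c (j + 1)) (x : ℤ) (v : ℕ) :
    ∑' t : Fin i → ℕ, c 0 ^ (Fin.cons v t : Fin (i + 1) → ℕ) (Fin.last i) *
        pathWeight η x (Fin.cons v t : Fin (i + 1) → ℕ) ≤
      (∏ j ∈ range i, c j ^ (M + 1)) * c i ^ (v + 1) := by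
  induction i generalizing x v with
  | zero =>
    simp only [tsum_fintype, univ_unique, sum_singleton, pathWeight, univ_eq_empty, prod_empty,
      range_zero, mul_one, one_mul]
    exact pow_le_pow_right₀ (hc 0 le_rfl) v.le_succ
  | succ i ih =>
    set P := ∏ j ∈ range i, c j ^ (M + 1)
    have hci : 1 ≤ c i := hc i (by omega)
    have ih' (w : ℕ) := ih (fun j hj => hc j (by omega)) (fun j hj => hrel j (by omega)) (x + 1) w
    rw [← (Fin.consEquiv fun _ => ℕ).tsum_eq, ENNReal.tsum_prod']
    simp only [Fin.consEquiv_apply, Fin.cons_last, pathWeight_cons, Fin.cons_zero,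
      mul_left_comm _ (negBinomWeight _ _ _), ENNReal.tsum_mul_left]
    calc ∑' w, negBinomWeight (η x) v w * ∑' t : Fin i → ℕ,
          c 0 ^ (Fin.cons w t : Fin (i + 1) → ℕ) (Fin.last i) *
            pathWeight η (x + 1) (Fin.cons w t : Fin (i + 1) → ℕ)
        ≤ ∑' w, negBinomWeight (η x) v w * (P * c i ^ (w + 1)) :=
          ENNReal.tsum_le_tsum fun w => by gcongr; exact ih' w
      _ = P * c i * ∑' w, c i ^ w * negBinomWeight (η x) v w := by
          rw [← ENNReal.tsum_mul_left]
          exact tsum_congr fun w => by ring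
      _ ≤ P * c i * (c i ^ M * c (i + 1) ^ (v + 1)) := by
          gcongr
          exact tsum_pow_mul_negBinomWeight_le hci
            (one_le_mul hci (hc (i + 1) le_rfl)) (hrel i (by omega)) (hη x) (hfair x) v
      _ = (∏ j ∈ range (i + 1), c j ^ (M + 1)) * c (i + 1) ^ (v + 1) := by
          rw [prod_range_succ]
          ring

def trajectoryCoins {i : ℕ} (u : Fin (i + 1) → ℕ) : Finset (ℤ × ℕ) :=
  univ.biUnion fun l : Fin i => (range (u l.castSucc + u l.succ + 1)).map
    ⟨fun j => (((l : ℕ) : ℤ), j), fun a b h => by simpa using h⟩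

def failurePattern {i : ℕ} (T : Fin i → Finset ℕ) (p : ℤ × ℕ) : Bool :=
  decide (∀ l : Fin i, ((l : ℕ) : ℤ) = p.1 → p.2 ∉ T l)

theorem failurePattern_apply {i : ℕ} (T : Fin i → Finset ℕ) (l : Fin i) (j : ℕ) :
    failurePattern T ((l : ℕ), j) = decide (j ∉ T l) := by
  simp [failurePattern, Fin.val_inj]

theorem prod_trajectoryCoins {M : Type*} [CommMonoid M] {i : ℕ} (u : Fin (i + 1) → ℕ)
    (T : Fin i → Finset ℕ) (f : ℤ × ℕ → Bool → M) :
    ∏ p ∈ trajectoryCoins u, f p (failurePattern T p) =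
      ∏ l : Fin i, ∏ j ∈ range (u l.castSucc + u l.succ + 1),
        f ((l : ℕ), j) (decide (j ∉ T l)) := by
  classical
  rw [trajectoryCoins, prod_biUnion]
  · refine prod_congr rfl fun l _ => ?_
    rw [prod_map]
    exact prod_congr rfl fun j _ => by rw [← failurePattern_apply T l j]; rfl
  · intro a _ b _ hab
    refine disjoint_left.2 fun p hpa hpb => hab ?_
    obtain ⟨j, -, rfl⟩ := Finset.mem_map.1 hpa
    obtain ⟨j', -, h⟩ := Finset.mem_map.1 hpb
    have hba : ((b : ℕ) : ℤ) = (a : ℕ) := congrArg Prod.fst h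
    exact (Fin.ext (by exact_mod_cast hba)).symm

/-- The moment parameters are `c j = momentParam (2 * k - j)`; note `momentParam 0 = 0`. -/
def momentParam (m : ℕ) : ℝ≥0 := (m + 1) / m

theorem coe_momentParam (m : ℕ) : (momentParam m : ℝ) = (m + 1) / m := by
  simp [momentParam]

theorem one_le_momentParam (m : ℕ) (hm : 1 ≤ m) : 1 ≤ momentParam m := by
  rw [← NNReal.coe_le_coe, coe_momentParam, NNReal.coe_one,
    one_le_div (by exact_mod_cast hm)]
  linarith

theorem momentParam_le_two (m : ℕ) (hm : 1 ≤ m) : momentParam m ≤ 2 := by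
  have hm' : (1 : ℝ) ≤ m := by exact_mod_cast hm
  rw [← NNReal.coe_le_coe, coe_momentParam, div_le_iff₀ (by linarith)]
  push_cast
  linarith

theorem two_mul_momentParam (m : ℕ) (hm : 1 ≤ m) :
    2 * momentParam m = 1 + momentParam (m + 1) * momentParam m := by
  have hm' : (1 : ℝ) ≤ m := by exact_mod_cast hm
  rw [← NNReal.coe_inj]
  push_cast [coe_momentParam]
  field_simp
  ring

theorem mul_prod_range_momentParam {N i : ℕ} (hi : i ≤ N) :
    ((N - i + 1 : ℕ) : ℝ≥0) * ∏ j ∈ range i, momentParam (N - j) = N + 1 := by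
  induction i with
  | zero => simp
  | succ i ih =>
    have hpos : ((N - i : ℕ) : ℝ≥0) ≠ 0 := by exact_mod_cast (show N - i ≠ 0 by omega)
    rw [prod_range_succ, ← ih (by omega), momentParam, show N - (i + 1) + 1 = N - i by omega]
    field_simp
    push_cast
    ring

theorem prod_range_momentParam_le_two {k i : ℕ} (hi : i ≤ k) :
    ∏ j ∈ range i, momentParam (2 * k - j) ≤ 2 := by
  have h := mul_prod_range_momentParam (N := 2 * k) (i := i) (by omega)
  have hpos : (0 : ℝ≥0) < ((2 * k - i + 1 : ℕ) : ℝ≥0) := by exact_mod_cast Nat.succ_pos _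
  rw [← mul_le_mul_iff_right₀ hpos, h]
  have : 2 * k + 1 ≤ (2 * k - i + 1) * 2 := by omega
  exact_mod_cast this

theorem exp_inv_le_momentParam (k : ℕ) (hk : 1 ≤ k) :
    Real.exp (1 / (2 * k + 1)) ≤ momentParam (2 * k) := by
  have hk' : (1 : ℝ) ≤ k := by exact_mod_cast hk
  refine (Real.exp_bound_div_one_sub_of_interval (by positivity)
    ((div_lt_one (by positivity)).2 (by linarith))).trans_eq ?_
  rw [coe_momentParam]
  field_simp
  push_cast
  ring

theorem tendsto_rpow_mul_exp_neg_rpow_div (b : ℝ) {a c : ℝ} (ha : 0 < a) (hc : 0 < c) :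
    Tendsto (fun x : ℝ => x ^ b * Real.exp (-(x ^ a / c))) atTop (nhds 0) := by
  have h := (tendsto_rpow_mul_exp_neg_mul_atTop_nhds_zero (b / a) c⁻¹ (inv_pos.2 hc)).comp
    (tendsto_rpow_atTop ha)
  refine h.congr' ((eventually_ge_atTop 0).mono fun x hx => ?_)
  show (x ^ a) ^ (b / a) * Real.exp (-c⁻¹ * x ^ a) = x ^ b * Real.exp (-(x ^ a / c))
  rw [← Real.rpow_mul hx, mul_div_cancel₀ b ha.ne', neg_mul, div_eq_inv_mul]

namespace ERWSetup

variable (S : ERWSetup)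

theorem measurable_cookie_apply (x : ℤ) (j : ℕ) : Measurable fun ω => S.cookie ω x j :=
  (measurable_pi_apply j).comp ((measurable_pi_apply x).comp S.meas_cookie)

theorem measurable_coinProb_cookie (b : Bool) (x : ℤ) (j : ℕ) :
    Measurable fun ω => ENNReal.ofReal (coinProb b (S.cookie ω x j)) := by
  cases b
  · exact (measurable_const.sub (S.measurable_cookie_apply x j)).ennreal_ofReal
  · exact (S.measurable_cookie_apply x j).ennreal_ofReal

def cylinder (s : Finset (ℤ × ℕ)) (bv : ℤ × ℕ → Bool) : Set S.Ω :=
  {ω | ∀ p ∈ s, S.B ω p.1 p.2 = bv p}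

theorem measurableSet_cylinder (s : Finset (ℤ × ℕ)) (bv : ℤ × ℕ → Bool) :
    MeasurableSet (S.cylinder s bv) := by
  have hB (p : ℤ × ℕ) : Measurable fun ω => S.B ω p.1 p.2 :=
    (measurable_pi_apply p.2).comp ((measurable_pi_apply p.1).comp S.meas_B)
  have hcyl : S.cylinder s bv = ⋂ p ∈ s, (fun ω => S.B ω p.1 p.2) ⁻¹' {bv p} := by
    ext ω; simp [cylinder]
  rw [hcyl]
  exact Finset.measurableSet_biInter s fun p _ => hB p (measurableSet_singleton (bv p))

theorem measure_cylinder (s : Finset (ℤ × ℕ)) (bv : ℤ × ℕ → Bool) :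
    S.μ (S.cylinder s bv) =
      ∫⁻ ω, ∏ p ∈ s, ENNReal.ofReal (coinProb (bv p) (S.cookie ω p.1 p.2)) ∂S.μ := by
  have := S.isProb
  set g : S.Ω → ℝ := fun ω => ∏ p ∈ s, coinProb (bv p) (S.cookie ω p.1 p.2)
  have hg (ω : S.Ω) : g ω ∈ Set.Icc (0 : ℝ) 1 := by
    have h := fun p => coinProb_mem_Icc (bv p) (S.cookie_mem ω p.1 p.2)
    exact ⟨prod_nonneg fun p _ => (h p).1, prod_le_one (fun p _ => (h p).1) fun p _ => (h p).2⟩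
  have hgm : Measurable g := by
    refine Finset.measurable_prod s fun p _ => ?_
    cases bv p
    · exact measurable_const.sub (S.measurable_cookie_apply p.1 p.2)
    · exact S.measurable_cookie_apply p.1 p.2
  have hcyl : S.μ.real (S.cylinder s bv) = ∫ ω, g ω ∂S.μ := by
    rw [← integral_indicator_one (S.measurableSet_cylinder s bv),
      ← integral_condExp S.meas_cookie.comap_le]
    have hind : (S.cylinder s bv).indicator 1 =
        fun ω => if ∀ p ∈ s, S.B ω p.1 p.2 = bv p then (1 : ℝ) else 0 := by
      ext ω
      classical
      rw [Set.indicator_apply]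
      exact if_congr Iff.rfl rfl rfl
    rw [hind]
    exact integral_congr_ae (S.condB s bv)
  rw [← ofReal_measureReal, hcyl, ofReal_integral_eq_lintegral_ofReal]
  · exact lintegral_congr fun ω =>
      ENNReal.ofReal_prod_of_nonneg fun p _ => (coinProb_mem_Icc _ (S.cookie_mem ω p.1 p.2)).1
  · exact (integrable_const (1 : ℝ)).mono' hgm.aestronglyMeasurable
      (ae_of_all _ fun ω => by simpa [abs_of_nonneg (hg ω).1] using (hg ω).2)
  · exact ae_of_all _ fun ω => (hg ω).1

theorem measure_cylinder_of_fair {s : Finset (ℤ × ℕ)} (bv : ℤ × ℕ → Bool)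
    (hs : ∀ p ∈ s, S.M ≤ p.2) : S.μ (S.cylinder s bv) = 2⁻¹ ^ #s := by
  have := S.isProb
  have hfair : ∀ᵐ ω ∂S.μ,
      ∏ p ∈ s, ENNReal.ofReal (coinProb (bv p) (S.cookie ω p.1 p.2)) = 2⁻¹ ^ #s := by
    filter_upwards [S.A1] with ω hω
    refine (prod_congr rfl fun p hp => ?_).trans (prod_const _)
    rw [hω p.1 p.2 (hs p hp)]
    have hhalf : ENNReal.ofReal (1 / 2) = 2⁻¹ := by
      rw [one_div, ENNReal.ofReal_inv_of_pos two_pos, ENNReal.ofReal_ofNat]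
    cases bv p <;> norm_num [coinProb] <;> exact hhalf
  rw [measure_cylinder, lintegral_congr_ae hfair, lintegral_const, measure_univ, mul_one]

theorem ae_exists_true : ∀ᵐ ω ∂S.μ, ∀ x L, ∃ j, L ≤ j ∧ S.B ω x j = true := by
  refine ae_all_iff.2 fun x => ae_all_iff.2 fun L => ae_iff.2 ?_
  refine nonpos_iff_eq_zero.1 (ge_of_tendsto' (ENNReal.tendsto_pow_atTop_nhds_zero_of_lt_one
    (r := 2⁻¹) (by norm_num)) fun T => ?_)
  set s := (range T).map ⟨fun t => (x, max L S.M + t), fun a b h => by simpa using h⟩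
  calc S.μ {ω | ¬∃ j, L ≤ j ∧ S.B ω x j = true}
      ≤ S.μ (S.cylinder s fun _ => false) := measure_mono fun ω hω p hp => by
        obtain ⟨t, -, rfl⟩ := mem_map.1 hp
        show S.B ω x (max L S.M + t) = false
        simpa using fun h => hω ⟨_, (le_max_left L S.M).trans (Nat.le_add_right _ t), h⟩
    _ = 2⁻¹ ^ T := by
        rw [S.measure_cylinder_of_fair _ fun p hp => ?_, card_map, card_range]
        obtain ⟨t, -, rfl⟩ := mem_map.1 hp
        exact (le_max_right L S.M).trans (Nat.le_add_right _ t)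

def trajectoryEvent {i : ℕ} (u : Fin (i + 1) → ℕ) : Set S.Ω :=
  {ω | ∀ l : Fin i, IsTransition (S.B ω (l : ℕ)) (u l.castSucc) (u l.succ)}

theorem trajectoryEvent_subset_biUnion_cylinder {i : ℕ} (u : Fin (i + 1) → ℕ) :
    S.trajectoryEvent u ⊆ ⋃ T ∈ Fintype.piFinset fun l : Fin i =>
      (range (u l.castSucc + u l.succ)).powersetCard (u l.succ),
        S.cylinder (trajectoryCoins u) (failurePattern T) := by
  intro ω hω
  choose T hT hB using fun l => (hω l).exists_pattern
  refine Set.mem_biUnion (Fintype.mem_piFinset.2 hT) fun p hp => ?_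
  obtain ⟨l, -, hp⟩ := mem_biUnion.1 hp
  obtain ⟨j, hj, rfl⟩ := Finset.mem_map.1 hp
  exact (hB l j (mem_range.1 hj)).trans (failurePattern_apply T l j).symm

theorem measure_trajectoryEvent_le {i : ℕ} (u : Fin (i + 1) → ℕ) :
    S.μ (S.trajectoryEvent u) ≤ ∫⁻ ω, pathWeight (S.cookie ω) 0 u ∂S.μ := by
  set A := Fintype.piFinset fun l : Fin i =>
    (range (u l.castSucc + u l.succ)).powersetCard (u l.succ)
  calc S.μ (S.trajectoryEvent u)
      ≤ ∑ T ∈ A, S.μ (S.cylinder (trajectoryCoins u) (failurePattern T)) :=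
        (measure_mono (S.trajectoryEvent_subset_biUnion_cylinder u)).trans
          (measure_biUnion_finset_le _ _)
    _ = ∑ T ∈ A, ∫⁻ ω, ∏ l, ∏ j ∈ range (u l.castSucc + u l.succ + 1),
          ENNReal.ofReal (coinProb (decide (j ∉ T l)) (S.cookie ω (l : ℕ) j)) ∂S.μ := by
        refine sum_congr rfl fun T _ => ?_
        rw [measure_cylinder]
        exact lintegral_congr fun ω =>
          prod_trajectoryCoins u T fun p b => ENNReal.ofReal (coinProb b (S.cookie ω p.1 p.2))
    _ = ∫⁻ ω, ∑ T ∈ A, ∏ l, ∏ j ∈ range (u l.castSucc + u l.succ + 1),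
          ENNReal.ofReal (coinProb (decide (j ∉ T l)) (S.cookie ω (l : ℕ) j)) ∂S.μ :=
        (lintegral_finsetSum _ fun T _ => Finset.measurable_prod _ fun l _ =>
          Finset.measurable_prod _ fun j _ => S.measurable_coinProb_cookie _ _ _).symm
    _ = ∫⁻ ω, pathWeight (S.cookie ω) 0 u ∂S.μ := by
        simp only [pathWeight, negBinomWeight, zero_add, prod_univ_sum]
        rfl

theorem measurable_pathWeight (x : ℤ) {i : ℕ} (u : Fin (i + 1) → ℕ) :
    Measurable fun ω => pathWeight (S.cookie ω) x u :=
  Finset.measurable_prod _ fun _ _ => Finset.measurable_sum _ fun _ _ =>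
    Finset.measurable_prod _ fun _ _ => S.measurable_coinProb_cookie _ _ _

theorem ae_mem_trajectoryEvent_backBP :
    ∀ᵐ ω ∂S.μ, ∀ i, ω ∈ S.trajectoryEvent fun l : Fin (i + 1) => backBP (S.B ω) 0 l := by
  filter_upwards [S.ae_exists_true] with ω hω i
  exact fun l => isTransition_backBP (exists_countTrue_eq (hω _) _)

theorem pow_mul_measure_le_backBP_le_tsum {z : ℝ≥0∞} (hz : 1 ≤ z) (i h : ℕ) :
    z ^ h * S.μ {ω | h ≤ backBP (S.B ω) 0 i} ≤
      ∑' t : Fin i → ℕ, z ^ (Fin.cons 0 t : Fin (i + 1) → ℕ) (Fin.last i) *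
        S.μ (S.trajectoryEvent (Fin.cons 0 t : Fin (i + 1) → ℕ)) := by
  set u : (Fin i → ℕ) → Fin (i + 1) → ℕ := fun t => Fin.cons 0 t
  set E : (Fin i → ℕ) → Set S.Ω :=
    fun t => if h ≤ u t (Fin.last i) then S.trajectoryEvent (u t) else ∅
  have hcover : {ω | h ≤ backBP (S.B ω) 0 i} ≤ᵐ[S.μ] ⋃ t, E t := by
    filter_upwards [S.ae_mem_trajectoryEvent_backBP] with ω hω hh
    refine Set.mem_iUnion.2 ⟨fun l => backBP (S.B ω) 0 (l + 1), ?_⟩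
    have hu : u (fun l => backBP (S.B ω) 0 (l + 1)) = fun l : Fin (i + 1) => backBP (S.B ω) 0 l :=
      cons_zero_backBP _ i
    have hh : h ≤ backBP (S.B ω) 0 i := hh
    simpa only [E, hu, Fin.val_last, if_pos hh] using hω i
  have hE (t : Fin i → ℕ) :
      z ^ h * S.μ (E t) ≤ z ^ u t (Fin.last i) * S.μ (S.trajectoryEvent (u t)) := by
    by_cases hh : h ≤ u t (Fin.last i)
    · simp only [E, if_pos hh]
      gcongr
    · simp [E, if_neg hh]
  calc z ^ h * S.μ {ω | h ≤ backBP (S.B ω) 0 i}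
      ≤ ∑' t, z ^ h * S.μ (E t) := by
        rw [ENNReal.tsum_mul_left]
        gcongr
        exact (measure_mono_ae hcover).trans (measure_iUnion_le E)
    _ ≤ _ := ENNReal.tsum_le_tsum hE

theorem pow_mul_measure_le_backBP_le {c : ℕ → ℝ≥0∞} {i : ℕ} (hc : ∀ j ≤ i, 1 ≤ c j)
    (hrel : ∀ j < i, 2 * c (j + 1) = 1 + c j * c (j + 1)) (h : ℕ) :
    c 0 ^ h * S.μ {ω | h ≤ backBP (S.B ω) 0 i} ≤ (∏ j ∈ range i, c j ^ (S.M + 1)) * c i := by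
  have := S.isProb
  set u : (Fin i → ℕ) → Fin (i + 1) → ℕ := fun t => Fin.cons 0 t
  calc c 0 ^ h * S.μ {ω | h ≤ backBP (S.B ω) 0 i}
      ≤ ∑' t, c 0 ^ u t (Fin.last i) * S.μ (S.trajectoryEvent (u t)) :=
        S.pow_mul_measure_le_backBP_le_tsum (hc 0 (Nat.zero_le i)) i h
    _ ≤ ∑' t, ∫⁻ ω, c 0 ^ u t (Fin.last i) * pathWeight (S.cookie ω) 0 (u t) ∂S.μ :=
        ENNReal.tsum_le_tsum fun t => by
          rw [lintegral_const_mul _ (S.measurable_pathWeight 0 _)]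
          gcongr
          exact S.measure_trajectoryEvent_le (u t)
    _ = ∫⁻ ω, ∑' t, c 0 ^ u t (Fin.last i) * pathWeight (S.cookie ω) 0 (u t) ∂S.μ :=
        (lintegral_tsum fun t => ((S.measurable_pathWeight 0 _).const_mul _).aemeasurable).symm
    _ ≤ ∫⁻ _, (∏ j ∈ range i, c j ^ (S.M + 1)) * c i ∂S.μ := by
        refine lintegral_mono_ae ?_
        filter_upwards [S.A1] with ω hω
        simpa using tsum_pow_mul_pathWeight_le (fun x j => S.cookie_mem ω x j) hω hc hrel 0 0
    _ = (∏ j ∈ range i, c j ^ (S.M + 1)) * c i := by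
        rw [lintegral_const, measure_univ, mul_one]

theorem measureReal_le_backBP_le {k : ℕ} (hk : 1 ≤ k) {i : ℕ} (hi : i ≤ k) (h : ℕ) :
    S.μ.real {ω | h ≤ backBP (S.B ω) 0 i} ≤ 2 ^ (S.M + 2) * Real.exp (-(h / (2 * k + 1))) := by
  set c : ℕ → ℝ≥0∞ := fun j => momentParam (2 * k - j)
  have hc : ∀ j ≤ i, 1 ≤ c j := fun j hj => by
    simp only [c]
    exact_mod_cast one_le_momentParam _ (by omega)
  have hrel : ∀ j < i, 2 * c (j + 1) = 1 + c j * c (j + 1) := fun j hj => by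
    have hm := two_mul_momentParam (2 * k - (j + 1)) (by omega)
    rw [show 2 * k - (j + 1) + 1 = 2 * k - j by omega] at hm
    simp only [c]
    exact_mod_cast hm
  have hP : (∏ j ∈ range i, c j ^ (S.M + 1)) * c i ≤ 2 ^ (S.M + 2) := by
    rw [prod_pow, pow_succ _ (S.M + 1)]
    gcongr
    · simp only [c, ← ENNReal.ofNNReal_finsetProd]
      exact_mod_cast prod_range_momentParam_le_two hi
    · simp only [c]
      exact_mod_cast momentParam_le_two _ (by omega)
  have hbound := (S.pow_mul_measure_le_backBP_le hc hrel h).trans hP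
  have hreal : (momentParam (2 * k) : ℝ) ^ h * S.μ.real {ω | h ≤ backBP (S.B ω) 0 i} ≤
      2 ^ (S.M + 2) := by
    simpa [c, measureReal_def, ENNReal.toReal_mul] using
      ENNReal.toReal_mono (by simp) hbound
  have hexp : Real.exp (h / (2 * k + 1)) ≤ (momentParam (2 * k) : ℝ) ^ h := by
    rw [div_eq_mul_one_div, Real.exp_nat_mul]
    exact pow_le_pow_left₀ (Real.exp_pos _).le (exp_inv_le_momentParam k hk) h
  rw [Real.exp_neg, ← div_eq_mul_inv, le_div_iff₀ (Real.exp_pos _), mul_comm]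
  exact (mul_le_mul_of_nonneg_right hexp measureReal_nonneg).trans hreal

theorem measureReal_lt_sum_backBP_le (k : ℕ) {x : ℝ} (hx : 0 ≤ x) :
    S.μ.real {ω | x < ∑ i ∈ range k, (backBP (S.B ω) 0 i : ℝ)} ≤
      k * (2 ^ (S.M + 2) * Real.exp (-(x / (k * (2 * k + 1))))) := by
  have := S.isProb
  rcases Nat.eq_zero_or_pos k with rfl | hk
  · simp [not_lt.2 hx]
  set h := ⌈x / k⌉₊
  have hcover : {ω | x < ∑ i ∈ range k, (backBP (S.B ω) 0 i : ℝ)} ⊆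
      ⋃ i ∈ range k, {ω | h ≤ backBP (S.B ω) 0 i} := by
    intro ω hω
    have hsum : ∑ _i ∈ range k, x / k < ∑ i ∈ range k, (backBP (S.B ω) 0 i : ℝ) := by
      rwa [sum_const, card_range, nsmul_eq_mul, mul_div_cancel₀ _ (by positivity)]
    obtain ⟨i, hi, hlt⟩ := exists_lt_of_sum_lt hsum
    exact Set.mem_biUnion hi (Nat.ceil_le.2 hlt.le)
  have hexp : Real.exp (-(h / (2 * k + 1))) ≤ Real.exp (-(x / (k * (2 * k + 1)))) := by
    rw [Real.exp_le_exp, neg_le_neg_iff, ← div_div]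
    gcongr
    exact Nat.le_ceil _
  calc S.μ.real {ω | x < ∑ i ∈ range k, (backBP (S.B ω) 0 i : ℝ)}
      ≤ ∑ i ∈ range k, S.μ.real {ω | h ≤ backBP (S.B ω) 0 i} :=
        (measureReal_mono hcover (measure_ne_top _ _)).trans (measureReal_biUnion_finset_le _ _)
    _ ≤ ∑ _i ∈ range k, 2 ^ (S.M + 2) * Real.exp (-(x / (k * (2 * k + 1)))) :=
        sum_le_sum fun i hi => (S.measureReal_le_backBP_le hk (mem_range.1 hi).le h).trans
          (by gcongr)
    _ = k * (2 ^ (S.M + 2) * Real.exp (-(x / (k * (2 * k + 1))))) := by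
        rw [sum_const, card_range, nsmul_eq_mul]

theorem measureReal_partial_sum_backBP_le (γ : ℝ) {n : ℕ} (hn : 1 ≤ n) :
    S.μ.real {ω | (n : ℝ) / 5 < ∑ i ∈ range ⌊(n : ℝ) ^ γ⌋₊, (backBP (S.B ω) 0 i : ℝ)} ≤
      2 ^ (S.M + 2) * ((n : ℝ) ^ γ * Real.exp (-((n : ℝ) ^ (1 - 2 * γ) / 15))) := by
  set k := ⌊(n : ℝ) ^ γ⌋₊
  have hn' : (0 : ℝ) < n := by exact_mod_cast hn
  refine (S.measureReal_lt_sum_backBP_le k (by positivity)).trans ?_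
  rcases Nat.eq_zero_or_pos k with hk | hk
  · rw [hk, Nat.cast_zero, zero_mul]
    positivity
  have hk' : (1 : ℝ) ≤ k := by exact_mod_cast hk
  have hkn : (k : ℝ) ≤ (n : ℝ) ^ γ := Nat.floor_le (by positivity)
  have hk2 : (k : ℝ) * (2 * k + 1) ≤ 3 * (n : ℝ) ^ (2 * γ) := by
    rw [mul_comm 2 γ, Real.rpow_mul hn'.le, Real.rpow_two]
    nlinarith
  have hrate : (n : ℝ) ^ (1 - 2 * γ) / 15 ≤ n / 5 / (k * (2 * k + 1)) := by
    rw [Real.rpow_sub hn', Real.rpow_one, div_div, div_div, div_le_div_iff_of_pos_left hn'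
      (by positivity) (by positivity)]
    linarith
  rw [mul_left_comm]
  gcongr

end ERWSetup

theorem backBP_partial_sum_small_o_general (S : ERWSetup)
    (γ : ℝ) (hγ : γ < 1 / 2) :
    Tendsto (fun n : ℕ =>
        (S.μ {ω | (n : ℝ) / 5 <
          ∑ i ∈ Finset.range ⌊(n : ℝ) ^ γ⌋₊, (backBP (S.B ω) 0 i : ℝ)}).toReal /
          (n : ℝ) ^ (2 * γ - (1 + S.delta) / 2))
      atTop (nhds 0) := by
  set e := 2 * γ - (1 + S.delta) / 2
  have hlim := ((tendsto_rpow_mul_exp_neg_rpow_div (γ - e) (by linarith : 0 < 1 - 2 * γ)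
    (by norm_num : (0 : ℝ) < 15)).comp tendsto_natCast_atTop_atTop).const_mul (2 ^ (S.M + 2))
  rw [mul_zero] at hlim
  refine tendsto_of_tendsto_of_tendsto_of_le_of_le' tendsto_const_nhds hlim
    (Eventually.of_forall fun n => by positivity) ?_
  filter_upwards [eventually_ge_atTop 1] with n hn
  have hn' : (0 : ℝ) < n := by exact_mod_cast hn
  refine (div_le_div_of_nonneg_right (S.measureReal_partial_sum_backBP_le γ hn)
    (by positivity)).trans_eq ?_
  rw [Function.comp_apply, Real.rpow_sub hn' γ e]
  ring

/-- **Equation (4.5).** Under (A1)-(A3) with `δ > 1` and `γ ∈ (0, 1/2)`,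
`P_V(Σ_{i=0}^{⌊n^γ⌋-1} V_i > n/5) = o(n^{2γ-(1+δ)/2})` as `n → ∞`. -/
theorem backBP_partial_sum_small_o (S : ERWSetup) (hδ : 1 < S.delta)
    (γ : ℝ) (hγ0 : 0 < γ) (hγ : γ < 1 / 2) :
    Tendsto (fun n : ℕ =>
        (S.μ {ω | (n : ℝ) / 5 <
          ∑ i ∈ Finset.range ⌊(n : ℝ) ^ γ⌋₊, (backBP (S.B ω) 0 i : ℝ)}).toReal /
          (n : ℝ) ^ (2 * γ - (1 + S.delta) / 2))
      atTop (nhds 0) :=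
  backBP_partial_sum_small_o_general S γ hγ
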